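/- arXiv:0711.4657 — 4 statements merged into one kernel-verified Lean document; each statement's English description precedes it below -/
import Mathlib

section
/- Let C and D be monoidal categories, and let F : C ⥤ D and G : D ⥤ C be lax monoidal functors. Suppose there are natural isomorphisms η : F ⋙ G ≅ 𝟭 C and ξ : G ⋙ F ≅ 𝟭 D whose hom components η.hom and ξ.hom are monoidal natural transformations (with respect to the composite lax monoidal structures on F ⋙ G and G ⋙ F and the identity lax monoidal structure on the identity functors). Then both F and G are strong monoidal: ε_F, ε_G and all μ_F X Y, μ_G X Y are isomorphisms. (This is the one-object instance of the paper's Proposition characterizing equivalences in the 2-category of bicategories, lax functors and icons: any lax functor participating in such an equivalence is a homomorphism.) -/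
/-!
Since `η.hom : F ⋙ G ⟶ 𝟭 C` is a monoidal isomorphism, the structure maps of `F ⋙ G`, namely
`ε G ≫ G.map (ε F)` and `μ G (F.obj X) (F.obj Y) ≫ G.map (μ F X Y)`, are isomorphisms, and
symmetrically for `G ⋙ F`. Applying `G` to the latter, the three maps `ε G`, `G.map (ε F)`,
`G.map (F.map (ε G))` have both consecutive composites invertible, so all three are
isomorphisms by two-out-of-six. At the objects `G.obj X'`, `G.obj Y'` the same argument makes
`G.map (F.map (μ G X' Y'))` invertible, and `F ⋙ G ≅ 𝟭 C` reflects isomorphisms. Exchanging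
the roles of `F` and `G` gives the claims about `F`.
-/

open CategoryTheory Category MonoidalCategory Functor.LaxMonoidal

namespace CategoryTheory

theorem isIso_of_isIso_comp_of_isIso_comp {T : Type*} [Category T] {W X Y Z : T}
    (f : W ⟶ X) (g : X ⟶ Y) (h : Y ⟶ Z) [IsIso (f ≫ g)] [IsIso (g ≫ h)] :
    IsIso f ∧ IsIso g ∧ IsIso h := by
  have : IsSplitMono g := .mk' ⟨h ≫ inv (g ≫ h), by rw [← assoc, IsIso.hom_inv_id]⟩
  have : IsSplitEpi g := .mk' ⟨inv (f ≫ g) ≫ f, by rw [assoc, IsIso.inv_hom_id]⟩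
  have : IsIso g := isIso_of_mono_of_isSplitEpi g
  exact ⟨IsIso.of_isIso_comp_right f g, this, IsIso.of_isIso_comp_left g h⟩

variable {C : Type*} [Category C] [MonoidalCategory C]
  {D : Type*} [Category D] [MonoidalCategory D]

namespace NatTrans.IsMonoidal

variable {P Q : C ⥤ D} [P.LaxMonoidal] [Q.LaxMonoidal]

theorem isIso_ε (τ : P ⟶ Q) [τ.IsMonoidal] [IsIso τ] [IsIso (ε Q)] : IsIso (ε P) := by
  have : IsIso (ε P ≫ τ.app (𝟙_ C)) := by rw [unit]; infer_instance
  exact IsIso.of_isIso_comp_right _ (τ.app _)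

theorem isIso_μ (τ : P ⟶ Q) [τ.IsMonoidal] [IsIso τ] (X Y : C) [IsIso (μ Q X Y)] :
    IsIso (μ P X Y) := by
  have : IsIso (μ P X Y ≫ τ.app (X ⊗ Y)) := by rw [tensor]; infer_instance
  exact IsIso.of_isIso_comp_right _ (τ.app _)

end NatTrans.IsMonoidal

variable {F : C ⥤ D} {G : D ⥤ C} [F.LaxMonoidal] [G.LaxMonoidal]

theorem isIso_ε_comp_map_ε (η : F ⋙ G ≅ 𝟭 C) [η.hom.IsMonoidal] : IsIso (ε G ≫ G.map (ε F)) :=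
  NatTrans.IsMonoidal.isIso_ε (Q := 𝟭 C) η.hom

theorem isIso_μ_comp_map_μ (η : F ⋙ G ≅ 𝟭 C) [η.hom.IsMonoidal] (X Y : C) :
    IsIso (μ G (F.obj X) (F.obj Y) ≫ G.map (μ F X Y)) :=
  NatTrans.IsMonoidal.isIso_μ (Q := 𝟭 C) η.hom X Y

theorem isIso_ε_of_monoidal_inverse (η : F ⋙ G ≅ 𝟭 C) [η.hom.IsMonoidal]
    (ξ : G ⋙ F ≅ 𝟭 D) [ξ.hom.IsMonoidal] : IsIso (ε G) := by
  have := isIso_ε_comp_map_ε η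
  have := isIso_ε_comp_map_ε ξ
  have : IsIso (G.map (ε F) ≫ G.map (F.map (ε G))) := by rw [← G.map_comp]; infer_instance
  exact (isIso_of_isIso_comp_of_isIso_comp (ε G) (G.map (ε F)) (G.map (F.map (ε G)))).1

theorem isIso_μ_of_monoidal_inverse (η : F ⋙ G ≅ 𝟭 C) [η.hom.IsMonoidal]
    (ξ : G ⋙ F ≅ 𝟭 D) [ξ.hom.IsMonoidal] (X' Y' : D) : IsIso (μ G X' Y') := by
  have := isIso_μ_comp_map_μ η (G.obj X') (G.obj Y')
  have := isIso_μ_comp_map_μ ξ X' Y'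
  have : IsIso (G.map (μ F (G.obj X') (G.obj Y')) ≫ G.map (F.map (μ G X' Y'))) := by
    rw [← G.map_comp]; infer_instance
  have : IsIso ((F ⋙ G).map (μ G X' Y')) :=
    (isIso_of_isIso_comp_of_isIso_comp (μ G (F.obj (G.obj X')) (F.obj (G.obj Y')))
      (G.map (μ F (G.obj X') (G.obj Y'))) (G.map (F.map (μ G X' Y')))).2.2
  exact (NatIso.isIso_map_iff η _).1 this

end CategoryTheory

/-- One-object instance of the Proposition characterizing equivalences in the
2-category of bicategories, lax functors and icons: if lax monoidal functors `F` and `G`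
are mutually inverse up to monoidal natural isomorphisms, then both are strong monoidal,
i.e. their units `ε` and tensorators `μ` are isomorphisms. -/
theorem strong_monoidal_of_monoidal_equivalence
    {C : Type*} [Category C] [MonoidalCategory C]
    {D : Type*} [Category D] [MonoidalCategory D]
    (F : C ⥤ D) (G : D ⥤ C) [F.LaxMonoidal] [G.LaxMonoidal]
    (η : F ⋙ G ≅ 𝟭 C) (hη : NatTrans.IsMonoidal η.hom)
    (ξ : G ⋙ F ≅ 𝟭 D) (hξ : NatTrans.IsMonoidal ξ.hom) :
    IsIso (ε F) ∧ IsIso (ε G) ∧ (∀ X Y : C, IsIso (μ F X Y)) ∧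
      (∀ X' Y' : D, IsIso (μ G X' Y')) :=
  ⟨isIso_ε_of_monoidal_inverse ξ η, isIso_ε_of_monoidal_inverse η ξ,
    isIso_μ_of_monoidal_inverse ξ η, isIso_μ_of_monoidal_inverse η ξ⟩
end

section
/- Let C and D be monoidal categories, and let F : C ⥤ D and G : D ⥤ C be lax monoidal functors. Suppose there are natural isomorphisms η : F ⋙ G ≅ 𝟭 C and ξ : G ⋙ F ≅ 𝟭 D whose hom components are monoidal natural transformations. Then ε_F, ε_G, every μ_F X Y (X, Y in C), and every μ_G X' Y' (X', Y' in D) are split monomorphisms. (This is the split-mono step, in the one-object case, of the proof of the paper's Proposition characterizing equivalences in the 2-category of bicategories, lax functors and icons; it uses that F and G are essentially surjective to pass from objects in the image of F to arbitrary objects.) -/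
open CategoryTheory Category MonoidalCategory Functor.LaxMonoidal

/-!
For a monoidal transformation `τ : F ⋙ G ⟶ 𝟭 C`, the unit and tensor axioms read
`ε G ≫ G.map (ε F) ≫ τ = 𝟙` and `μ G (F X) (F Y) ≫ G.map (μ F X Y) ≫ τ = τ ⊗ τ`. The first
is a retraction of `ε G`; when `τ` is invertible the second gives one of `μ G` at objects in the
image of `F`. Every object is isomorphic to one in that image, and `μ G` is natural.
-/

namespace CategoryTheory.Functor.LaxMonoidal

variable {C : Type*} [Category C] [MonoidalCategory C]
  {D : Type*} [Category D] [MonoidalCategory D]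

lemma isSplitMono_ε_of_isMonoidal {F : C ⥤ D} {G : D ⥤ C} [F.LaxMonoidal] [G.LaxMonoidal]
    (τ : F ⋙ G ⟶ 𝟭 C) [τ.IsMonoidal] : IsSplitMono (ε G) :=
  IsSplitMono.mk' ⟨G.map (ε F) ≫ τ.app (𝟙_ C), by
    simpa [comp_ε] using NatTrans.IsMonoidal.unit (τ := τ)⟩

lemma isSplitMono_μ_obj_of_isMonoidal {F : C ⥤ D} {G : D ⥤ C} [F.LaxMonoidal] [G.LaxMonoidal]
    (τ : F ⋙ G ⟶ 𝟭 C) [τ.IsMonoidal] [IsIso τ] (X Y : C) :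
    IsSplitMono (μ G (F.obj X) (F.obj Y)) :=
  IsSplitMono.mk' ⟨G.map (μ F X Y) ≫ τ.app (X ⊗ Y) ≫ CategoryTheory.inv (τ.app X ⊗ₘ τ.app Y), by
    have := NatTrans.IsMonoidal.tensor (τ := τ) X Y
    simp only [comp_μ, id_μ, comp_id, assoc] at this
    simp [reassoc_of% this]⟩

lemma isSplitMono_μ_of_iso (F : C ⥤ D) [F.LaxMonoidal] {X Y X' Y' : C} (e : X ≅ X') (e' : Y ≅ Y')
    (h : IsSplitMono (μ F X' Y')) : IsSplitMono (μ F X Y) := by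
  have : μ F X Y = (F.map e.hom ⊗ₘ F.map e'.hom) ≫ μ F X' Y' ≫ F.map (e.inv ⊗ₘ e'.inv) := by
    rw [μ_natural_assoc, ← F.map_comp, tensorHom_comp_tensorHom]; simp
  rw [this]
  infer_instance

end CategoryTheory.Functor.LaxMonoidal

/-- Split-mono step (one-object case) of the proof of the Proposition characterizing
equivalences in the 2-category of bicategories, lax functors and icons: if lax monoidal
functors `F` and `G` are mutually inverse up to monoidal natural isomorphisms, then
the units `ε` and all tensorators `μ` of `F` and `G` are split monomorphisms. -/
theorem structure_isSplitMono_of_monoidal_equivalence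
    {C : Type*} [Category C] [MonoidalCategory C]
    {D : Type*} [Category D] [MonoidalCategory D]
    (F : C ⥤ D) (G : D ⥤ C) [F.LaxMonoidal] [G.LaxMonoidal]
    (η : F ⋙ G ≅ 𝟭 C) (hη : NatTrans.IsMonoidal η.hom)
    (ξ : G ⋙ F ≅ 𝟭 D) (hξ : NatTrans.IsMonoidal ξ.hom) :
    IsSplitMono (ε F) ∧ IsSplitMono (ε G) ∧
      (∀ X Y : C, IsSplitMono (μ F X Y)) ∧
      (∀ X' Y' : D, IsSplitMono (μ G X' Y')) := by
  refine ⟨isSplitMono_ε_of_isMonoidal ξ.hom, isSplitMono_ε_of_isMonoidal η.hom,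
    fun X Y => ?_, fun X' Y' => ?_⟩
  · exact isSplitMono_μ_of_iso F (η.app X).symm (η.app Y).symm
      (isSplitMono_μ_obj_of_isMonoidal ξ.hom (F.obj X) (F.obj Y))
  · exact isSplitMono_μ_of_iso G (ξ.app X').symm (ξ.app Y').symm
      (isSplitMono_μ_obj_of_isMonoidal η.hom (G.obj X') (G.obj Y'))
end

section
/- Let C and D be monoidal categories, and let F : C ⥤ D and G : D ⥤ C be lax monoidal functors. Suppose there are natural isomorphisms η : F ⋙ G ≅ 𝟭 C and ξ : G ⋙ F ≅ 𝟭 D whose hom components are monoidal natural transformations. Then ε_F, ε_G, every μ_F X Y (X, Y in C), and every μ_G X' Y' (X', Y' in D) are split epimorphisms. (This is the split-epi step, in the one-object case, of the proof of the paper's Proposition characterizing equivalences in the 2-category of bicategories, lax functors and icons; it uses that G.map (μ_F X Y) is split epi and that the fully faithful functor G reflects split epimorphisms.) -/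
/-!
Monoidality of `η` says `ε G ≫ G.map (ε F) ≫ η = 𝟙` and
`μ G ≫ G.map (μ F X Y) ≫ η = η ⊗ η`. As `η` is invertible, `G.map (ε F)` and `G.map (μ F X Y)`
are split epimorphisms, and `G`, being an equivalence, reflects split epimorphisms.
The same argument with `ξ` handles `ε G` and `μ G`.
-/

open CategoryTheory Category MonoidalCategory Functor.LaxMonoidal

lemma isSplitEpi_of_comp_comp_eq_isIso {E : Type*} [Category E] {W X Y Z : E}
    (a : W ⟶ X) (b : X ⟶ Y) (c : Y ⟶ Z) (d : W ⟶ Z) [IsIso c] [IsIso d]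
    (h : a ≫ b ≫ c = d) : IsSplitEpi b := by
  have : IsSplitEpi (b ≫ c) := IsSplitEpi.mk' ⟨inv d ≫ a, by simp [h]⟩
  simpa using (inferInstance : IsSplitEpi ((b ≫ c) ≫ inv c))

section

variable {C : Type*} [Category C] [MonoidalCategory C]
  {D : Type*} [Category D] [MonoidalCategory D]
  (F : C ⥤ D) (G : D ⥤ C) [F.LaxMonoidal] [G.LaxMonoidal] [G.Full] [G.Faithful]
  (τ : F ⋙ G ≅ 𝟭 C) (hτ : NatTrans.IsMonoidal τ.hom)
include hτ

lemma isSplitEpi_ε_of_isMonoidal_iso : IsSplitEpi (ε F) := by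
  have h := hτ.unit
  rw [comp_ε, id_ε, assoc] at h
  exact (G.isSplitEpi_iff _).mp (isSplitEpi_of_comp_comp_eq_isIso _ _ _ _ h)

lemma isSplitEpi_μ_of_isMonoidal_iso (X Y : C) : IsSplitEpi (μ F X Y) := by
  have h := hτ.tensor X Y
  rw [comp_μ, id_μ, comp_id, assoc] at h
  exact (G.isSplitEpi_iff _).mp (isSplitEpi_of_comp_comp_eq_isIso _ _ _ _ h)

end

/-- Split-epi step (one-object case) of the proof of the Proposition characterizing
equivalences in the 2-category of bicategories, lax functors and icons: if lax monoidal
functors `F` and `G` are mutually inverse up to monoidal natural isomorphisms, then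
the units `ε` and all tensorators `μ` of `F` and `G` are split epimorphisms. -/
theorem structure_isSplitEpi_of_monoidal_equivalence
    {C : Type*} [Category C] [MonoidalCategory C]
    {D : Type*} [Category D] [MonoidalCategory D]
    (F : C ⥤ D) (G : D ⥤ C) [F.LaxMonoidal] [G.LaxMonoidal]
    (η : F ⋙ G ≅ 𝟭 C) (hη : NatTrans.IsMonoidal η.hom)
    (ξ : G ⋙ F ≅ 𝟭 D) (hξ : NatTrans.IsMonoidal ξ.hom) :
    IsSplitEpi (ε F) ∧ IsSplitEpi (ε G) ∧
      (∀ X Y : C, IsSplitEpi (μ F X Y)) ∧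
      (∀ X' Y' : D, IsSplitEpi (μ G X' Y')) := by
  let e : C ≌ D := .mk F G η.symm ξ
  have : F.Full := e.fullyFaithfulFunctor.full
  have : F.Faithful := e.fullyFaithfulFunctor.faithful
  have : G.Full := e.fullyFaithfulInverse.full
  have : G.Faithful := e.fullyFaithfulInverse.faithful
  exact ⟨isSplitEpi_ε_of_isMonoidal_iso F G η hη, isSplitEpi_ε_of_isMonoidal_iso G F ξ hξ,
    isSplitEpi_μ_of_isMonoidal_iso F G η hη, isSplitEpi_μ_of_isMonoidal_iso G F ξ hξ⟩
end

section
/- For every bicategory B there exist a bicategory B' which is strict (its associators and unitors are identities, in the sense of Mathlib's `Bicategory.Strict`) together with a pseudofunctor F : B ⟶ B' such that the object map of F is bijective and, for every pair of objects a, b of B, the induced functor F.mapFunctor a b : (a ⟶ b) ⥤ (F.obj a ⟶ F.obj b) between hom-categories is an equivalence of categories. (This is the content of the paper's Theorem that every bicategory is equivalent, in the 2-category of bicategories and icons, to a 2-category, so that this 2-category of bicategories is biequivalent to its full sub-2-category of strict bicategories; combined with the paper's characterization of equivalences, such an F is precisely an equivalence in that 2-category.) -/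
/-!
Replace the 1-cells of `B` by paths of composable 1-cells, composed by concatenation, which is
strictly associative and unital. A 2-cell between two paths is a 2-cell of `B` between their
composites, and whiskering is transported along the comparison isomorphisms
`composePath (p.comp q) ≅ composePath p ≫ composePath q`. These satisfy a cocycle condition,
which is exactly what makes the identity associators and unitors of paths coherent. Sending a
1-cell to the path of length one is then a pseudofunctor which is the identity on objects and an
equivalence on hom-categories, since every path is isomorphic to the path of length one on its
composite.
-/

universe w v u

open CategoryTheory

namespace CategoryTheory.Bicategory

variable {B : Type u} [Bicategory.{w, v} B]

def composePath {a : B} : ∀ {b : B}, Quiver.Path a b → (a ⟶ b)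
  | _, .nil => 𝟙 a
  | _, .cons p f => composePath p ≫ f

@[simp] lemma composePath_nil (a : B) : composePath (.nil : Quiver.Path a a) = 𝟙 a := rfl

@[simp] lemma composePath_cons {a b c : B} (p : Quiver.Path a b) (f : b ⟶ c) :
    composePath (p.cons f) = composePath p ≫ f := rfl

def composePathCompIso {a b : B} (p : Quiver.Path a b) : ∀ {c : B} (q : Quiver.Path b c),
    composePath (p.comp q) ≅ composePath p ≫ composePath q
  | _, .nil => (ρ_ _).symm
  | _, .cons q f => whiskerRightIso (composePathCompIso p q) f ≪≫ α_ _ _ _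

@[simp] lemma composePathCompIso_nil {a b : B} (p : Quiver.Path a b) :
    composePathCompIso p .nil = (ρ_ (composePath p)).symm := rfl

@[simp] lemma composePathCompIso_cons {a b c d : B} (p : Quiver.Path a b) (q : Quiver.Path b c)
    (f : c ⟶ d) :
    composePathCompIso p (q.cons f) = whiskerRightIso (composePathCompIso p q) f ≪≫ α_ _ _ _ :=
  rfl

-- In this lemma and the next, `simp` leaves `eqToHom`s between paths that are equal by definition
-- of `Quiver.Path.comp`, hence identities up to `rfl`.
lemma composePathCompIso_nil_left {a : B} : ∀ {b : B} (q : Quiver.Path a b),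
    composePathCompIso .nil q = eqToIso (congrArg composePath q.nil_comp) ≪≫ (λ_ _).symm
  | _, .nil => by ext; simp [unitors_inv_equal]; exact (Category.id_comp _).symm
  | _, .cons q f => by ext; simp [composePathCompIso_nil_left q]; rfl

lemma composePathCompIso_assoc {a b c : B} (p : Quiver.Path a b) (q : Quiver.Path b c) :
    ∀ {d : B} (r : Quiver.Path c d),
      (composePathCompIso (p.comp q) r).hom ≫ (composePathCompIso p q).hom ▷ composePath r ≫
          (α_ _ _ _).hom =
        eqToHom (congrArg composePath (p.comp_assoc q r)) ≫
          (composePathCompIso p (q.comp r)).hom ≫ composePath p ◁ (composePathCompIso q r).hom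
  | _, .nil => by simp; exact (Category.id_comp _).symm
  | _, .cons r f => by
      have ih := composePathCompIso_assoc p q r
      simp only [Quiver.Path.comp_cons, composePathCompIso_cons, Iso.trans_hom,
        whiskerRightIso_hom, composePath_cons, Category.assoc]
      rw [← associator_naturality_left_assoc, ← pentagon, ← comp_whiskerRight_assoc,
        ← comp_whiskerRight_assoc]
      conv_lhs => rw [Category.assoc, ih]
      simp

lemma composePathCompIso_comp_left {a b c d : B} (p : Quiver.Path a b) (q : Quiver.Path b c)
    (r : Quiver.Path c d) :
    composePathCompIso (p.comp q) r =
      eqToIso (congrArg composePath (p.comp_assoc q r)) ≪≫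
        composePathCompIso p (q.comp r) ≪≫ whiskerLeftIso _ (composePathCompIso q r) ≪≫
          (α_ _ _ _).symm ≪≫
          whiskerRightIso (composePathCompIso p q).symm _ := by
  ext
  rw [← cancel_mono ((composePathCompIso p q).hom ▷ composePath r),
    ← cancel_mono (α_ _ _ _).hom]
  simpa using composePathCompIso_assoc p q r

lemma composePathCompIso_comp_right {a b c d : B} (p : Quiver.Path a b) (q : Quiver.Path b c)
    (r : Quiver.Path c d) :
    composePathCompIso p (q.comp r) =
      eqToIso (congrArg composePath (p.comp_assoc q r)).symm ≪≫
        composePathCompIso (p.comp q) r ≪≫ whiskerRightIso (composePathCompIso p q) _ ≪≫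
          α_ _ _ _ ≪≫ whiskerLeftIso _ (composePathCompIso q r).symm := by
  ext
  simp [composePathCompIso_comp_left]

-- Typed with `composePath` rather than with what it unfolds to (`𝟙 a ≫ f`, ...), so that these
-- can serve as data in `Strictification` where 2-cells are morphisms between `composePath`s.
def composePathToPathIso {a b : B} (f : a ⟶ b) : composePath f.toPath ≅ f := λ_ f

def composePathToPathCompIso {a b c : B} (f : a ⟶ b) (g : b ⟶ c) :
    composePath (f ≫ g).toPath ≅ composePath (f.toPath.comp g.toPath) :=
  (α_ _ _ _).symm

def composePathToPathIdIso (a : B) :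
    composePath (𝟙 a).toPath ≅ composePath (.nil : Quiver.Path a a) :=
  ρ_ _

variable (B) in
structure Strictification : Type u where
  as : B

namespace Strictification

instance : CategoryStruct.{max u v} (Strictification B) where
  Hom a b := Quiver.Path a.as b.as
  id _ := .nil
  comp p q := p.comp q

variable {a b c d : Strictification B}

lemma id_def (a : Strictification B) : 𝟙 a = (.nil : Quiver.Path a.as a.as) := rfl

lemma comp_def (p : a ⟶ b) (q : b ⟶ c) : p ≫ q = Quiver.Path.comp (V := B) p q := rfl

@[ext]
structure Hom₂ (p q : a ⟶ b) : Type w where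
  hom : composePath (B := B) p ⟶ composePath q

instance homCategory (a b : Strictification B) : Category.{w} (a ⟶ b) where
  Hom := Hom₂
  id _ := ⟨𝟙 _⟩
  comp η θ := ⟨η.hom ≫ θ.hom⟩

section

variable {p q r : a ⟶ b}

@[ext]
lemma hom₂_ext {η θ : p ⟶ q} (h : η.hom = θ.hom) : η = θ :=
  Hom₂.ext h

@[simp] lemma id_hom (p : a ⟶ b) : Hom₂.hom (𝟙 p) = 𝟙 (composePath p) := rfl

@[simp] lemma comp_hom (η : p ⟶ q) (θ : q ⟶ r) : (η ≫ θ).hom = η.hom ≫ θ.hom := rfl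

@[simp]
lemma eqToHom_hom (h : p = q) : (eqToHom h).hom = eqToHom (congrArg composePath h) := by
  subst h; rfl

def isoMk (e : composePath (B := B) p ≅ composePath q) : p ≅ q where
  hom := ⟨e.hom⟩
  inv := ⟨e.inv⟩

@[simp] lemma isoMk_hom_hom (e : composePath (B := B) p ≅ composePath q) :
    (isoMk e).hom.hom = e.hom := rfl

@[simp] lemma isoMk_inv_hom (e : composePath (B := B) p ≅ composePath q) :
    (isoMk e).inv.hom = e.inv := rfl

end

protected def whiskerLeft (p : a ⟶ b) {q q' : b ⟶ c} (η : q ⟶ q') : p ≫ q ⟶ p ≫ q' :=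
  Hom₂.mk <| (composePathCompIso p q).hom ≫ composePath p ◁ η.hom ≫
    (composePathCompIso p q').inv

protected def whiskerRight {p p' : a ⟶ b} (η : p ⟶ p') (q : b ⟶ c) : p ≫ q ⟶ p' ≫ q :=
  Hom₂.mk <| (composePathCompIso p q).hom ≫ η.hom ▷ composePath q ≫
    (composePathCompIso p' q).inv

protected lemma whiskerLeft_eqToHom (p : a ⟶ b) {q q' : b ⟶ c} (h : q = q') :
    Strictification.whiskerLeft p (eqToHom h) = eqToHom (by rw [h]) := by
  subst h; ext; simp [Strictification.whiskerLeft]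

protected lemma eqToHom_whiskerRight {p p' : a ⟶ b} (h : p = p') (q : b ⟶ c) :
    Strictification.whiskerRight (eqToHom h) q = eqToHom (by rw [h]) := by
  subst h; ext; simp [Strictification.whiskerRight]

attribute [local simp] Strictification.whiskerLeft Strictification.whiskerRight in
instance bicategory : Bicategory.{w, max u v} (Strictification B) where
  homCategory := Strictification.homCategory
  whiskerLeft := Strictification.whiskerLeft
  whiskerRight := Strictification.whiskerRight
  associator p q r := eqToIso (Quiver.Path.comp_assoc p q r : (p ≫ q) ≫ r = p ≫ q ≫ r)
  leftUnitor p := eqToIso (Quiver.Path.nil_comp p : 𝟙 _ ≫ p = p)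
  rightUnitor p := eqToIso (Quiver.Path.comp_nil p : p ≫ 𝟙 _ = p)
  whiskerLeft_id := by intros; ext; simp
  whiskerLeft_comp := by intros; ext; simp
  id_whiskerLeft := by intros; ext; simp [id_def, composePathCompIso_nil_left, eqToIso]
  comp_whiskerLeft := by
    intros; ext
    simp [comp_def, composePathCompIso_comp_left, eqToIso, ← whisker_exchange_assoc]
  id_whiskerRight := by intros; ext; simp
  comp_whiskerRight := by intros; ext; simp
  whiskerRight_id {_ _ p q} η := by
    ext
    show (ρ_ (composePath p)).inv ≫ η.hom ▷ 𝟙 _ ≫ (ρ_ (composePath q)).hom =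
      𝟙 _ ≫ η.hom ≫ 𝟙 _
    simp
  whiskerRight_comp := by
    intros; ext
    simp [comp_def, composePathCompIso_comp_right, eqToIso, whisker_exchange_assoc]
  whisker_assoc := by intros; ext; simp [comp_def, composePathCompIso_comp_left, eqToIso]
  whisker_exchange := by intros; ext; simp [whisker_exchange_assoc]
  pentagon := by
    intros
    simp only [eqToIso.hom, Strictification.whiskerLeft_eqToHom,
      Strictification.eqToHom_whiskerRight, eqToHom_trans]
  triangle := by
    intros
    rw [eqToIso.hom, eqToIso.hom, eqToIso.hom, Strictification.whiskerLeft_eqToHom,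
      Strictification.eqToHom_whiskerRight, eqToHom_trans]

instance : Strict (Strictification B) where
  id_comp := Quiver.Path.nil_comp
  comp_id _ := rfl
  assoc := Quiver.Path.comp_assoc

@[simp] lemma whiskerLeft_hom (p : a ⟶ b) {q q' : b ⟶ c} (η : q ⟶ q') :
    (p ◁ η).hom = (composePathCompIso p q).hom ≫ composePath p ◁ η.hom ≫
      (composePathCompIso p q').inv := rfl

@[simp] lemma whiskerRight_hom {p p' : a ⟶ b} (η : p ⟶ p') (q : b ⟶ c) :
    (η ▷ q).hom = (composePathCompIso p q).hom ≫ η.hom ▷ composePath q ≫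
      (composePathCompIso p' q).inv := rfl

@[simp] lemma associator_hom_hom (p : a ⟶ b) (q : b ⟶ c) (r : c ⟶ d) :
    (α_ p q r).hom.hom = (composePathCompIso (p ≫ q) r).hom ≫
      (composePathCompIso p q).hom ▷ composePath r ≫ (α_ _ _ _).hom ≫
        composePath p ◁ (composePathCompIso q r).inv ≫
          (composePathCompIso p (q ≫ r)).inv := by
  simp [Strict.associator_eqToIso, comp_def, composePathCompIso_comp_left]

@[simp] lemma leftUnitor_hom_hom (p : a ⟶ b) :
    (λ_ p).hom.hom = (composePathCompIso (𝟙 a) p).hom ≫ (λ_ (composePath p)).hom := by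
  simp [Strict.leftUnitor_eqToIso, id_def, composePathCompIso_nil_left]

-- `ρ_ p` is the identity, `p.comp .nil` being `p` by definition.
@[simp] lemma rightUnitor_hom_hom (p : a ⟶ b) :
    (ρ_ p).hom.hom = (composePathCompIso p (𝟙 b)).hom ≫ (ρ_ (composePath p)).hom :=
  (Iso.inv_hom_id (ρ_ (composePath p))).symm

variable (B) in
def pseudofunctor : Pseudofunctor B (Strictification B) where
  obj a := ⟨a⟩
  map f := f.toPath
  map₂ {_ _ f g} η := Hom₂.mk <|
    (composePathToPathIso f).hom ≫ η ≫ (composePathToPathIso g).inv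
  mapId a := isoMk (composePathToPathIdIso a)
  mapComp f g := isoMk (composePathToPathCompIso f g)
  map₂_id := by intros; ext; simp
  map₂_comp := by intros; ext; simp
  -- `simp` computes in `Strictification`; `dsimp` then unfolds the paths of length one, leaving
  -- a coherence problem in `B`.
  map₂_whisker_left := by
    intros; ext; simp
    dsimp [composePathToPathIso, composePathToPathCompIso, Quiver.Hom.toPath]
    simp only [Iso.symm_hom, Iso.symm_inv, whiskerRightIso_hom, whiskerRightIso_inv]
    bicategory
  map₂_whisker_right := by
    intros; ext; simp
    dsimp [composePathToPathIso, composePathToPathCompIso, Quiver.Hom.toPath]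
    simp only [Iso.symm_hom, Iso.symm_inv, whiskerRightIso_hom, whiskerRightIso_inv]
    bicategory
  map₂_associator := by
    intros; ext; simp
    dsimp [composePathToPathIso, composePathToPathCompIso, Quiver.Hom.toPath, comp_def]
    simp only [Iso.trans_hom, Iso.trans_inv, Iso.symm_hom, Iso.symm_inv, whiskerRightIso_hom,
      whiskerRightIso_inv]
    bicategory
  map₂_left_unitor := by
    intros; ext; simp
    dsimp [composePathToPathIso, composePathToPathCompIso, composePathToPathIdIso,
      Quiver.Hom.toPath]
    simp only [Iso.symm_hom, Iso.symm_inv, whiskerRightIso_hom, whiskerRightIso_inv]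
    bicategory
  map₂_right_unitor := by
    intros; ext; simp
    dsimp [composePathToPathIso, composePathToPathCompIso, composePathToPathIdIso,
      Quiver.Hom.toPath, id_def]
    simp only [Iso.symm_hom, whiskerRightIso_hom]
    bicategory

lemma pseudofunctor_obj_bijective : Function.Bijective (pseudofunctor B).obj :=
  Function.bijective_iff_has_inverse.2 ⟨Strictification.as, fun _ => rfl, fun _ => rfl⟩

def fullyFaithfulMapFunctor (a b : B) : ((pseudofunctor B).mapFunctor a b).FullyFaithful where
  preimage {f g} φ := (composePathToPathIso f).homCongr (composePathToPathIso g) φ.hom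
  map_preimage {f g} φ := Hom₂.ext <|
    ((composePathToPathIso f).homCongr (composePathToPathIso g)).symm_apply_apply φ.hom
  preimage_map {f g} η :=
    ((composePathToPathIso f).homCongr (composePathToPathIso g)).apply_symm_apply η

instance (a b : B) : ((pseudofunctor B).mapFunctor a b).IsEquivalence where
  faithful := (fullyFaithfulMapFunctor a b).faithful
  full := (fullyFaithfulMapFunctor a b).full
  essSurj.mem_essImage p := ⟨composePath p, ⟨isoMk (composePathToPathIso (composePath p))⟩⟩

end Strictification

end CategoryTheory.Bicategory

/-- Every bicategory is equivalent, in the 2-category of bicategories and icons, to a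
2-category: there is a strict bicategory `B'` and a pseudofunctor `F : B ⟶ B'` that is
bijective on objects and an equivalence on all hom-categories. -/
theorem exists_strictification
    (B : Type u) [Bicategory.{w, v} B] :
    ∃ (B' : Type u) (instB' : Bicategory.{w, max u v} B')
      (instStrict : Bicategory.Strict B') (F : Pseudofunctor B B'),
      Function.Bijective F.obj ∧
        ∀ a b : B, (F.mapFunctor a b).IsEquivalence :=
  ⟨_, _, inferInstance, Bicategory.Strictification.pseudofunctor B,
    Bicategory.Strictification.pseudofunctor_obj_bijective, fun _ _ => inferInstance⟩
end
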